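/- Let n ≥ 1, α = (α_1, …, α_{n+1}) ∈ ℝ^{n+1} with α_1 ≥ α_2 ≥ … ≥ α_{n+1}, β = (β_1, …, β_n) ∈ ℝ^n with β_1 ≥ β_2 ≥ … ≥ β_n, and t ∈ ℝ. Then r(t, α, β) = 0 if and only if t satisfies the interlacing condition, i.e., −α_{n+2−j} ≥ β_j + t ≥ −α_{n+1−j} for every j ∈ {1, …, n}. -/

import Mathlib

/-!
With `ε k l = 1` if `k + l ≤ n + 1` and `ε k l = -1` otherwise, the row and column sums of `ε`
are exactly the coefficients produced by expanding the pairwise differences of the sorted `α`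
and `β`, and the coefficient of `t` vanishes. Hence, when `α` and `β` are non-increasing,
`r(t, α, β) = Σ_{k,l} (|x_{kl}| - x_{kl})` with `x_{kl} = ε k l (t + α_k + β_l)`, a sum of
non-negative terms. So `r = 0` iff every `t + α_k + β_l` has the sign `ε k l`, and by
monotonicity it suffices to check this at the two entries `k = n + 1 - l` and `k = n + 2 - l`
adjacent to the sign change, which is the interlacing condition.
-/

open Finset

/-- For `n ≥ 1`, `α = (α 1, …, α (n+1))`, `β = (β 1, …, β n)` and `t ∈ ℝ`,
`r(t, α, β) = Σ_{l=1}^{n} Σ_{k=1}^{n+1} |t + α_k + β_l|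
  − Σ_{1 ≤ k < l ≤ n+1} |α_k − α_l| − Σ_{1 ≤ k < l ≤ n} |β_k − β_l|`. -/
noncomputable def rfun (n : ℕ) (t : ℝ) (α β : ℕ → ℝ) : ℝ :=
  (∑ l ∈ Icc 1 n, ∑ k ∈ Icc 1 (n + 1), |t + α k + β l|)
    - (∑ k ∈ Icc 1 (n + 1), ∑ l ∈ Ioc k (n + 1), |α k - α l|)
    - (∑ k ∈ Icc 1 n, ∑ l ∈ Ioc k n, |β k - β l|)

theorem antitoneOn_Icc_of_succ_le {γ : Type*} [Preorder γ] {f : ℕ → γ} {a b : ℕ}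
    (hf : ∀ k, a ≤ k → k + 1 ≤ b → f (k + 1) ≤ f k) : AntitoneOn f (Set.Icc a b) := by
  rintro x ⟨hax, -⟩ y ⟨-, hyb⟩ hxy
  induction y, hxy using Nat.le_induction with
  | base => exact le_rfl
  | succ y hxy ih => exact (hf y (hax.trans hxy) hyb).trans (ih (by omega))

theorem sum_Icc_sum_Ioc_sub (N : ℕ) (a : ℕ → ℝ) :
    ∑ k ∈ Icc 1 N, ∑ l ∈ Ioc k N, (a k - a l) = ∑ k ∈ Icc 1 N, ((N : ℝ) + 1 - 2 * k) * a k := by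
  induction N with
  | zero => simp
  | succ N ih =>
    have hinner : ∀ k ∈ Icc 1 N, ∑ l ∈ Ioc k (N + 1), (a k - a l)
        = ∑ l ∈ Ioc k N, (a k - a l) + (a k - a (N + 1)) :=
      fun k hk => sum_Ioc_succ_top (mem_Icc.1 hk).2 _
    have hcoeff : ∀ k ∈ Icc 1 N, ((↑(N + 1) : ℝ) + 1 - 2 * k) * a k
        = ((N : ℝ) + 1 - 2 * k) * a k + a k :=
      fun k _ => by push_cast; ring
    rw [sum_Icc_succ_top (by omega), sum_congr rfl hinner, sum_add_distrib, ih, Ioc_self,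
      sum_empty, sum_Icc_succ_top (by omega), sum_congr rfl hcoeff, sum_add_distrib,
      sum_sub_distrib, sum_const, Nat.card_Icc, nsmul_eq_mul]
    push_cast
    ring

theorem sum_Icc_centered (n : ℕ) : ∑ l ∈ Icc 1 n, ((n : ℝ) + 1 - 2 * l) = 0 := by
  simpa using (sum_Icc_sum_Ioc_sub n fun _ => 1).symm

theorem sum_Icc_ite_le (N m : ℕ) (hm : m ≤ N) :
    ∑ l ∈ Icc 1 N, (if l ≤ m then (1 : ℝ) else -1) = 2 * m - N := by
  have hle : {l ∈ Icc 1 N | l ≤ m} = Icc 1 m := by ext; simp only [mem_filter, mem_Icc]; omega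
  have hgt : {l ∈ Icc 1 N | ¬l ≤ m} = Ioc m N := by ext; simp only [mem_filter, mem_Icc, mem_Ioc]; omega
  rw [sum_ite, hle, hgt]
  simp [Nat.cast_sub hm]
  ring

/-- The sign that `t + α k + β l` has when `t` satisfies the interlacing condition. -/
def interlacingSign (n k l : ℕ) : ℝ := if k + l ≤ n + 1 then 1 else -1

section InterlacingSign

variable {n : ℕ} {t : ℝ} {α β : ℕ → ℝ}

theorem abs_interlacingSign (n k l : ℕ) : |interlacingSign n k l| = 1 := by
  unfold interlacingSign; split_ifs <;> simp

theorem sum_interlacingSign_left {k : ℕ} (hk : k ∈ Icc 1 (n + 1)) :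
    ∑ l ∈ Icc 1 n, interlacingSign n k l = n + 2 - 2 * k := by
  rw [mem_Icc] at hk
  have hsign : ∀ l ∈ Icc 1 n, interlacingSign n k l = if l ≤ n + 1 - k then 1 else -1 :=
    fun l _ => if_congr (by omega) rfl rfl
  rw [sum_congr rfl hsign, sum_Icc_ite_le n _ (by omega), Nat.cast_sub hk.2]
  push_cast
  ring

theorem sum_interlacingSign_right {l : ℕ} (hl : l ∈ Icc 1 n) :
    ∑ k ∈ Icc 1 (n + 1), interlacingSign n k l = n + 1 - 2 * l := by
  rw [mem_Icc] at hl
  have hsign : ∀ k ∈ Icc 1 (n + 1), interlacingSign n k l = if k ≤ n + 1 - l then 1 else -1 :=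
    fun k _ => if_congr (by omega) rfl rfl
  rw [sum_congr rfl hsign, sum_Icc_ite_le (n + 1) _ (by omega), Nat.cast_sub (by omega)]
  push_cast
  ring

theorem sum_interlacingSign_mul (n : ℕ) (t : ℝ) (α β : ℕ → ℝ) :
    ∑ l ∈ Icc 1 n, ∑ k ∈ Icc 1 (n + 1), interlacingSign n k l * (t + α k + β l) =
      ∑ k ∈ Icc 1 (n + 1), ∑ l ∈ Ioc k (n + 1), (α k - α l) +
        ∑ k ∈ Icc 1 n, ∑ l ∈ Ioc k n, (β k - β l) := by
  have ht : ∑ l ∈ Icc 1 n, ∑ k ∈ Icc 1 (n + 1), interlacingSign n k l * t = 0 := by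
    simp only [← sum_mul]
    rw [sum_congr rfl fun l hl => by rw [sum_interlacingSign_right hl], sum_Icc_centered,
      zero_mul]
  have hα : ∑ l ∈ Icc 1 n, ∑ k ∈ Icc 1 (n + 1), interlacingSign n k l * α k
      = ∑ k ∈ Icc 1 (n + 1), ((↑(n + 1) : ℝ) + 1 - 2 * k) * α k := by
    rw [sum_comm]
    refine sum_congr rfl fun k hk => ?_
    rw [← sum_mul, sum_interlacingSign_left hk]
    push_cast
    ring
  have hβ : ∑ l ∈ Icc 1 n, ∑ k ∈ Icc 1 (n + 1), interlacingSign n k l * β l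
      = ∑ l ∈ Icc 1 n, ((n : ℝ) + 1 - 2 * l) * β l :=
    sum_congr rfl fun l hl => by rw [← sum_mul, sum_interlacingSign_right hl]
  simp only [mul_add, sum_add_distrib]
  rw [ht, hα, hβ, sum_Icc_sum_Ioc_sub, sum_Icc_sum_Ioc_sub, zero_add]

theorem sum_Ioc_abs_sub_of_antitoneOn {N : ℕ} {a : ℕ → ℝ} (ha : AntitoneOn a (Set.Icc 1 N)) :
    ∑ k ∈ Icc 1 N, ∑ l ∈ Ioc k N, |a k - a l| = ∑ k ∈ Icc 1 N, ∑ l ∈ Ioc k N, (a k - a l) :=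
  sum_congr rfl fun k hk => sum_congr rfl fun l hl => by
    simp only [mem_Icc, mem_Ioc] at hk hl
    exact abs_of_nonneg (sub_nonneg.2 (ha ⟨hk.1, hk.2⟩ ⟨by omega, hl.2⟩ hl.1.le))

theorem rfun_eq_sum_abs_sub (hα : AntitoneOn α (Set.Icc 1 (n + 1)))
    (hβ : AntitoneOn β (Set.Icc 1 n)) :
    rfun n t α β = ∑ l ∈ Icc 1 n, ∑ k ∈ Icc 1 (n + 1),
      (|interlacingSign n k l * (t + α k + β l)| - interlacingSign n k l * (t + α k + β l)) := by
  simp only [sum_sub_distrib, abs_mul, abs_interlacingSign, one_mul]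
  rw [sum_interlacingSign_mul, rfun, sum_Ioc_abs_sub_of_antitoneOn hα,
    sum_Ioc_abs_sub_of_antitoneOn hβ]
  ring

theorem rfun_eq_zero_iff_forall_nonneg (hα : AntitoneOn α (Set.Icc 1 (n + 1)))
    (hβ : AntitoneOn β (Set.Icc 1 n)) :
    rfun n t α β = 0 ↔
      ∀ l ∈ Icc 1 n, ∀ k ∈ Icc 1 (n + 1), 0 ≤ interlacingSign n k l * (t + α k + β l) := by
  have hnonneg : ∀ x : ℝ, 0 ≤ |x| - x := fun x => sub_nonneg.2 (le_abs_self x)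
  rw [rfun_eq_sum_abs_sub hα hβ,
    sum_eq_zero_iff_of_nonneg fun l _ => sum_nonneg fun k _ => hnonneg _]
  refine forall₂_congr fun l _ => ?_
  rw [sum_eq_zero_iff_of_nonneg fun k _ => hnonneg _]
  exact forall₂_congr fun k _ => by rw [sub_eq_zero, abs_eq_self]

theorem interlacing_iff_forall_nonneg (hα : AntitoneOn α (Set.Icc 1 (n + 1))) :
    (∀ j, 1 ≤ j → j ≤ n → -α (n + 2 - j) ≥ β j + t ∧ β j + t ≥ -α (n + 1 - j)) ↔
      ∀ l ∈ Icc 1 n, ∀ k ∈ Icc 1 (n + 1), 0 ≤ interlacingSign n k l * (t + α k + β l) := by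
  simp only [mem_Icc, interlacingSign]
  constructor
  · rintro h l ⟨hl1, hln⟩ k ⟨hk1, hkn⟩
    obtain ⟨hupper, hlower⟩ := h l hl1 hln
    split_ifs with hkl
    · have := hα ⟨hk1, hkn⟩ ⟨by omega, by omega⟩ (show k ≤ n + 1 - l by omega)
      linarith
    · have := hα ⟨by omega, by omega⟩ ⟨hk1, hkn⟩ (show n + 2 - l ≤ k by omega)
      linarith
  · intro h j hj1 hjn
    have hupper := h j ⟨hj1, hjn⟩ (n + 2 - j) ⟨by omega, by omega⟩
    have hlower := h j ⟨hj1, hjn⟩ (n + 1 - j) ⟨by omega, by omega⟩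
    rw [if_neg (by omega)] at hupper
    rw [if_pos (by omega)] at hlower
    constructor <;> linarith

end InterlacingSign

theorem statement2_general (n : ℕ) (α β : ℕ → ℝ)
    (hα : ∀ k, 1 ≤ k → k ≤ n → α (k + 1) ≤ α k)
    (hβ : ∀ k, 1 ≤ k → k + 1 ≤ n → β (k + 1) ≤ β k)
    (t : ℝ) :
    rfun n t α β = 0 ↔
      (∀ j, 1 ≤ j → j ≤ n →
        -α (n + 2 - j) ≥ β j + t ∧ β j + t ≥ -α (n + 1 - j)) := by
  have hαanti : AntitoneOn α (Set.Icc 1 (n + 1)) :=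
    antitoneOn_Icc_of_succ_le fun k hk hkn => hα k hk (by omega)
  have hβanti : AntitoneOn β (Set.Icc 1 n) := antitoneOn_Icc_of_succ_le hβ
  rw [rfun_eq_zero_iff_forall_nonneg hαanti hβanti, interlacing_iff_forall_nonneg hαanti]

/-- Let `n ≥ 1`, `α_1 ≥ … ≥ α_{n+1}`, `β_1 ≥ … ≥ β_n`, and `t ∈ ℝ`.  Then
`r(t, α, β) = 0` iff `t` satisfies the interlacing condition
`−α_{n+2−j} ≥ β_j + t ≥ −α_{n+1−j}` for every `j ∈ {1, …, n}`. -/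
theorem statement2 (n : ℕ) (hn : 1 ≤ n) (α β : ℕ → ℝ)
    (hα : ∀ k, 1 ≤ k → k ≤ n → α (k + 1) ≤ α k)
    (hβ : ∀ k, 1 ≤ k → k + 1 ≤ n → β (k + 1) ≤ β k)
    (t : ℝ) :
    rfun n t α β = 0 ↔
      (∀ j, 1 ≤ j → j ≤ n →
        -α (n + 2 - j) ≥ β j + t ∧ β j + t ≥ -α (n + 1 - j)) :=
  statement2_general n α β hα hβ t
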